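/- arXiv:1910.12812 — 2 statements merged into one kernel-verified Lean document; each statement's English description precedes it below -/
import Mathlib

section
/- Let 𝔤 be the 8-dimensional stratified Lie algebra of step 3 defined below and let λ ∈ ℝ with λ ≠ 1. Then the Lie subalgebra of 𝔤 generated by the subspace W¹ = span{X₁, X₂ + λX₀, X₃} of the first stratum is a 7-dimensional stratified Lie algebra of step 3 with first stratum W¹ (a Carnot subalgebra of 𝔤), and it is isomorphic as a stratified Lie algebra to 𝔤_λ. -/
/-!
Inside `𝔤`, put `Z = (X₁, X₂ + λX₀, X₃, (1 - λ)X₄, X₅, X₆, X₇)`. A direct computation shows that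
the brackets of the `Z i` are exactly the structure constants of `𝔤_λ`, and `Z` is linearly
independent precisely because `λ ≠ 1`. The span of `Z` is therefore a Lie subalgebra; it contains
`W¹ = span {Z₀, Z₁, Z₂}` and is generated by it, since `Z₃, …, Z₆` are iterated brackets of
`Z₀, Z₁, Z₂`. So the subalgebra generated by `W¹` has the basis `Z`, and sending `Z` to any basis
of `𝔤_λ` with the same structure constants is a Lie isomorphism. The strata are the weight
spaces for the weights `0, 0, 0, 1, 1, 1, 2` of `Z₀, …, Z₆`: the bracket of weights `m` and
`n` has weight `m + n + 1`, and `Z₃ = ⁅Z₀, Z₁⁆, Z₄ = ⁅Z₁, Z₂⁆, Z₅ = ⁅Z₂, Z₀⁆, Z₆ = ⁅Z₄, Z₀⁆`.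
-/

open Module

/-- The span of all brackets of elements of two submodules of a Lie algebra. -/
def bracketSpan {L : Type*} [LieRing L] [LieAlgebra ℝ L] (A B : Submodule ℝ L) :
    Submodule ℝ L :=
  Submodule.span ℝ {z : L | ∃ x ∈ A, ∃ y ∈ B, z = ⁅x, y⁆}

/-- `V` is a stratification of step `s` of the real Lie algebra `L`:
`L = V 0 ⊕ ⋯ ⊕ V (s-1)`, `V (i+1) = ⁅V 0, V i⁆` for all `i` (in particular
`⁅V 0, V (s-1)⁆ = 0`, since `V i = ⊥` for `i ≥ s`), and `V (s-1) ≠ ⊥`. -/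
structure IsStratification (L : Type*) [LieRing L] [LieAlgebra ℝ L]
    (s : ℕ) (V : ℕ → Submodule ℝ L) : Prop where
  indep : iSupIndep V
  supEq : (⨆ i, V i) = ⊤
  last_ne_bot : V (s - 1) ≠ ⊥
  bot_of_ge : ∀ i, s ≤ i → V i = ⊥
  step : ∀ i, V (i + 1) = bracketSpan (V 0) (V i)

/-- Structure constants of the 8-dimensional step-3 Carnot algebra 𝔤, with respect to an
(ordered) basis `(X₀, X₁, …, X₇)`:  `[X₁,X₂] = X₄`, `[X₁,X₃] = −X₆`, `[X₁,X₀] = −X₄`,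
`[X₂,X₃] = X₅`, `[X₁,X₅] = −X₇`, `[X₃,X₄] = X₇`, `[X₀,X₆] = X₇`, all other brackets of
basis vectors being zero (up to skew-symmetry). -/
def gBr {M : Type*} [AddCommGroup M] (b : Fin 8 → M) (i j : Fin 8) : M :=
  match (i : ℕ), (j : ℕ) with
  | 1, 2 => b 4
  | 2, 1 => -b 4
  | 1, 3 => -b 6
  | 3, 1 => b 6
  | 1, 0 => -b 4
  | 0, 1 => b 4
  | 2, 3 => b 5
  | 3, 2 => -b 5
  | 1, 5 => -b 7
  | 5, 1 => b 7
  | 3, 4 => b 7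
  | 4, 3 => -b 7
  | 0, 6 => b 7
  | 6, 0 => -b 7
  | _, _ => 0

/-- Structure constants of the 7-dimensional step-3 Carnot algebra `𝔤_μ`, with respect to an
(ordered) basis `(X₁, …, X₇)` (indexed here by `0, …, 6`): `[X₁,X₂] = X₄`, `[X₁,X₃] = −X₆`,
`[X₂,X₃] = X₅`, `[X₁,X₅] = −X₇`, `[X₂,X₆] = μX₇`, `[X₃,X₄] = (1−μ)X₇`, all other brackets
of basis vectors being zero (up to skew-symmetry). -/
def gmuBr {M : Type*} [AddCommGroup M] [Module ℝ M] (μ : ℝ) (c : Fin 7 → M)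
    (i j : Fin 7) : M :=
  match (i : ℕ), (j : ℕ) with
  | 0, 1 => c 3
  | 1, 0 => -c 3
  | 0, 2 => -c 5
  | 2, 0 => c 5
  | 1, 2 => c 4
  | 2, 1 => -c 4
  | 0, 4 => -c 6
  | 4, 0 => c 6
  | 1, 5 => μ • c 6
  | 5, 1 => -(μ • c 6)
  | 2, 3 => (1 - μ) • c 6
  | 3, 2 => -((1 - μ) • c 6)
  | _, _ => 0

open Function Submodule

section Bracket

variable {L : Type*} [LieRing L] [LieAlgebra ℝ L]

lemma bracketSpan_eq_map₂ (A B : Submodule ℝ L) :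
    bracketSpan A B = map₂ (LieModule.toEnd ℝ L L : L →ₗ[ℝ] Module.End ℝ L) A B := by
  rw [map₂_eq_span_image2, bracketSpan]
  congr 1
  ext z
  simp [Set.mem_image2, eq_comm]

lemma bracketSpan_span_span (s t : Set L) :
    bracketSpan (span ℝ s) (span ℝ t) = span ℝ (Set.image2 (⁅·, ·⁆) s t) := by
  rw [bracketSpan_eq_map₂, map₂_span_span]
  rfl

lemma lie_mem_bracketSpan {A B : Submodule ℝ L} {x y : L} (hx : x ∈ A) (hy : y ∈ B) :
    ⁅x, y⁆ ∈ bracketSpan A B :=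
  subset_span ⟨x, hx, y, hy, rfl⟩

end Bracket

theorem LinearIndependent.iSupIndep_span_image {ι κ R M : Type*} [Ring R] [AddCommGroup M]
    [Module R M] {v : ι → M} (hv : LinearIndependent R v) {s : κ → Set ι}
    (hs : Pairwise (Disjoint on s)) : iSupIndep fun k => span R (v '' s k) := by
  rw [iSupIndep_def]
  intro k
  have hsup : (⨆ (j) (_ : j ≠ k), span R (v '' s j)) =
      span R (v '' ⋃ (j) (_ : j ≠ k), s j) := by
    simp only [Set.image_iUnion, span_iUnion]
  rw [hsup]
  exact hv.disjoint_span_image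
    (Set.disjoint_iUnion_right.2 fun j => Set.disjoint_iUnion_right.2 fun hj => hs hj.symm)

section LieEquivOfBasis

variable {ι R N P : Type*} [CommRing R] [LieRing N] [LieAlgebra R N] [LieRing P]
  [LieAlgebra R P]

lemma LinearMap.map_lie_of_basis (d : Basis ι R N) (f : N →ₗ[R] P)
    (hf : ∀ i j, f ⁅d i, d j⁆ = ⁅f (d i), f (d j)⁆) (x y : N) : f ⁅x, y⁆ = ⁅f x, f y⁆ := by
  have key : (LieModule.toEnd R N N : N →ₗ[R] Module.End R N).compr₂ f =
      (LieModule.toEnd R P P : P →ₗ[R] Module.End R P).compl₁₂ f f :=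
    LinearMap.ext_basis d d fun i j => by simpa using hf i j
  simpa using LinearMap.congr_fun₂ key x y

noncomputable def lieEquivOfBasis (d : Basis ι R N) (c : Basis ι R P)
    (h : ∀ i j, d.equiv c (Equiv.refl ι) ⁅d i, d j⁆ = ⁅c i, c j⁆) : N ≃ₗ⁅R⁆ P :=
  { d.equiv c (Equiv.refl ι) with
    map_lie' := fun {x y} =>
      LinearMap.map_lie_of_basis d (d.equiv c (Equiv.refl ι)).toLinearMap
        (fun i j => by simpa using h i j) x y }

@[simp]
lemma lieEquivOfBasis_apply_basis (d : Basis ι R N) (c : Basis ι R P)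
    (h : ∀ i j, d.equiv c (Equiv.refl ι) ⁅d i, d j⁆ = ⁅c i, c j⁆) (k : ι) :
    lieEquivOfBasis d c h (d k) = c k := by
  change d.equiv c (Equiv.refl ι) (d k) = c k
  simp

end LieEquivOfBasis

def gmuWeight : Fin 7 → ℕ := ![0, 0, 0, 1, 1, 1, 2]

def gmuStratum {N : Type*} [AddCommGroup N] [Module ℝ N] (d : Fin 7 → N) (n : ℕ) :
    Submodule ℝ N :=
  span ℝ (d '' (gmuWeight ⁻¹' {n}))

section Stratum

variable {N : Type*} [AddCommGroup N] [Module ℝ N] (d : Fin 7 → N)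

lemma mem_gmuStratum {k : Fin 7} {n : ℕ} (hk : gmuWeight k = n) : d k ∈ gmuStratum d n :=
  subset_span ⟨k, hk, rfl⟩

lemma gmuStratum_zero : gmuStratum d 0 = span ℝ {d 0, d 1, d 2} := by
  have : gmuWeight ⁻¹' {0} = {0, 1, 2} := by
    ext k; fin_cases k <;> simp [gmuWeight]
  simp [gmuStratum, this, Set.image_insert_eq]

lemma gmuStratum_one : gmuStratum d 1 = span ℝ {d 3, d 4, d 5} := by
  have : gmuWeight ⁻¹' {1} = {3, 4, 5} := by
    ext k; fin_cases k <;> simp [gmuWeight]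
  simp [gmuStratum, this, Set.image_insert_eq]

lemma gmuStratum_two : gmuStratum d 2 = span ℝ {d 6} := by
  have : gmuWeight ⁻¹' {2} = {6} := by
    ext k; fin_cases k <;> simp [gmuWeight]
  simp [gmuStratum, this]

lemma gmuStratum_of_three_le {n : ℕ} (hn : 3 ≤ n) : gmuStratum d n = ⊥ := by
  have : gmuWeight ⁻¹' {n} = ∅ := by
    ext k; fin_cases k <;> simp [gmuWeight] <;> omega
  simp [gmuStratum, this]

lemma iSup_gmuStratum : ⨆ n, gmuStratum d n = span ℝ (Set.range d) := by
  simp only [gmuStratum, ← span_iUnion, ← Set.image_iUnion, ← Set.preimage_iUnion,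
    Set.iUnion_of_singleton, Set.preimage_univ, Set.image_univ]

lemma map_gmuStratum {P : Type*} [AddCommGroup P] [Module ℝ P] {c : Fin 7 → P}
    (f : N →ₗ[ℝ] P) (hf : ∀ k, f (d k) = c k) (n : ℕ) : (gmuStratum d n).map f = gmuStratum c n := by
  have hfd : f ∘ d = c := funext hf
  rw [gmuStratum, map_span, ← Set.image_comp, hfd, gmuStratum]

lemma gmuBr_mem_gmuStratum (μ : ℝ) (i j : Fin 7) :
    gmuBr μ d i j ∈ gmuStratum d (gmuWeight i + gmuWeight j + 1) := by
  fin_cases i <;> fin_cases j <;> simp only [gmuBr] <;>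
    first
    | exact zero_mem _
    | exact mem_gmuStratum d (by decide)
    | exact neg_mem (mem_gmuStratum d (by decide))
    | exact smul_mem _ _ (mem_gmuStratum d (by decide))
    | exact neg_mem (smul_mem _ _ (mem_gmuStratum d (by decide)))

lemma gmuBr_mem_span_range (μ : ℝ) (i j : Fin 7) : gmuBr μ d i j ∈ span ℝ (Set.range d) :=
  span_mono (Set.image_subset_range _ _) (gmuBr_mem_gmuStratum d μ i j)

lemma map_gmuBr {P : Type*} [AddCommGroup P] [Module ℝ P] {c : Fin 7 → P} (f : N →ₗ[ℝ] P)
    (hf : ∀ k, f (d k) = c k) (μ : ℝ) (i j : Fin 7) : f (gmuBr μ d i j) = gmuBr μ c i j := by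
  fin_cases i <;> fin_cases j <;> simp [gmuBr, hf]

end Stratum

section GmuAlgebra

variable {N : Type*} [LieRing N] [LieAlgebra ℝ N] {μ : ℝ} {d : Fin 7 → N}

lemma eq_lie_of_gmuBr (hd : ∀ i j, ⁅d i, d j⁆ = gmuBr μ d i j) :
    d 3 = ⁅d 0, d 1⁆ ∧ d 4 = ⁅d 1, d 2⁆ ∧ d 5 = ⁅d 2, d 0⁆ ∧ d 6 = ⁅d 4, d 0⁆ := by
  simp [hd, gmuBr]

lemma bracketSpan_gmuStratum_le (hd : ∀ i j, ⁅d i, d j⁆ = gmuBr μ d i j) (m n : ℕ) :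
    bracketSpan (gmuStratum d m) (gmuStratum d n) ≤ gmuStratum d (m + n + 1) := by
  rw [gmuStratum, gmuStratum, bracketSpan_span_span, span_le, Set.image2_subset_iff]
  rintro _ ⟨i, rfl, rfl⟩ _ ⟨j, rfl, rfl⟩
  rw [hd]
  exact gmuBr_mem_gmuStratum d μ i j

lemma gmuStratum_succ_le_bracketSpan (hd : ∀ i j, ⁅d i, d j⁆ = gmuBr μ d i j) (n : ℕ) :
    gmuStratum d (n + 1) ≤ bracketSpan (gmuStratum d 0) (gmuStratum d n) := by
  obtain ⟨h3, h4, h5, h6⟩ := eq_lie_of_gmuBr hd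
  have mem : ∀ {k : Fin 7} {n : ℕ}, gmuWeight k = n → d k ∈ gmuStratum d n :=
    mem_gmuStratum d
  match n with
  | 0 =>
    rw [gmuStratum_one, span_le]
    rintro _ (rfl | rfl | rfl)
    · rw [h3]; exact lie_mem_bracketSpan (mem rfl) (mem rfl)
    · rw [h4]; exact lie_mem_bracketSpan (mem rfl) (mem rfl)
    · rw [h5]; exact lie_mem_bracketSpan (mem rfl) (mem rfl)
  | 1 =>
    rw [gmuStratum_two, span_le, Set.singleton_subset_iff, h6, ← lie_skew]
    exact neg_mem (lie_mem_bracketSpan (mem rfl) (mem rfl))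
  | n + 2 =>
    rw [gmuStratum_of_three_le d (by omega)]
    exact bot_le

theorem isStratification_gmuStratum (d : Basis (Fin 7) ℝ N)
    (hd : ∀ i j, ⁅d i, d j⁆ = gmuBr μ d i j) : IsStratification N 3 (gmuStratum d) where
  indep := d.linearIndependent.iSupIndep_span_image (pairwise_disjoint_fiber gmuWeight)
  supEq := by rw [iSup_gmuStratum, d.span_eq]
  last_ne_bot := by simpa [gmuStratum_two, span_singleton_eq_bot] using d.ne_zero 6
  bot_of_ge _ := gmuStratum_of_three_le d
  step n := le_antisymm (gmuStratum_succ_le_bracketSpan hd n)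
    (bracketSpan_gmuStratum_le hd 0 n |>.trans_eq (by rw [zero_add]))

lemma Module.Basis.equiv_lie_of_gmuBr {P : Type*} [LieRing P] [LieAlgebra ℝ P]
    (d : Basis (Fin 7) ℝ N) (c : Basis (Fin 7) ℝ P)
    (hd : ∀ i j, ⁅d i, d j⁆ = gmuBr μ d i j) (hc : ∀ i j, ⁅c i, c j⁆ = gmuBr μ c i j)
    (i j : Fin 7) : d.equiv c (Equiv.refl _) ⁅d i, d j⁆ = ⁅c i, c j⁆ := by
  rw [hd, hc]
  exact map_gmuBr _ (d.equiv c (Equiv.refl _)).toLinearMap (fun k => by simp) μ i j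

end GmuAlgebra

section GmuSubalgebra

variable {L : Type*} [LieRing L] [LieAlgebra ℝ L] {μ : ℝ} {Z : Fin 7 → L}

lemma lieSpan_span_eq_span_range_of_gmuBr (hZ : ∀ i j, ⁅Z i, Z j⁆ = gmuBr μ Z i j) :
    (LieSubalgebra.lieSpan ℝ L (span ℝ {Z 0, Z 1, Z 2} : Set L)).toSubmodule =
      span ℝ (Set.range Z) := by
  apply le_antisymm
  · let K : LieSubalgebra ℝ L :=
      { toSubmodule := span ℝ (Set.range Z)
        lie_mem' := fun {x y} hx hy => by
          have hle : bracketSpan (span ℝ (Set.range Z)) (span ℝ (Set.range Z)) ≤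
              span ℝ (Set.range Z) := by
            rw [bracketSpan_span_span, span_le, Set.image2_subset_iff]
            rintro _ ⟨i, rfl⟩ _ ⟨j, rfl⟩
            rw [hZ]
            exact gmuBr_mem_span_range Z μ i j
          exact hle (lie_mem_bracketSpan hx hy) }
    have hgen : (span ℝ {Z 0, Z 1, Z 2} : Set L) ⊆ K :=
      span_le.2 (by rintro _ (rfl | rfl | rfl) <;> exact subset_span ⟨_, rfl⟩)
    exact (LieSubalgebra.lieSpan_le.2 hgen : _)
  · set K := LieSubalgebra.lieSpan ℝ L (span ℝ {Z 0, Z 1, Z 2} : Set L)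
    have gen : ∀ {k}, k = 0 ∨ k = 1 ∨ k = 2 → Z k ∈ K := fun hk =>
      LieSubalgebra.subset_lieSpan (subset_span (by rcases hk with rfl | rfl | rfl <;> simp))
    obtain ⟨h3, h4, h5, h6⟩ := eq_lie_of_gmuBr hZ
    have h4K : Z 4 ∈ K := h4 ▸ K.lie_mem (gen (by simp)) (gen (by simp))
    rw [span_le]
    rintro _ ⟨k, rfl⟩
    fin_cases k
    · exact gen (by simp)
    · exact gen (by simp)
    · exact gen (by simp)
    · exact h3 ▸ K.lie_mem (gen (by simp)) (gen (by simp))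
    · exact h4K
    · exact h5 ▸ K.lie_mem (gen (by simp)) (gen (by simp))
    · exact h6 ▸ K.lie_mem h4K (gen (by simp))

lemma LieSubalgebra.exists_gmuBr_basis {K : LieSubalgebra ℝ L} (hli : LinearIndependent ℝ Z)
    (hK : K.toSubmodule = span ℝ (Set.range Z)) (hZ : ∀ i j, ⁅Z i, Z j⁆ = gmuBr μ Z i j) :
    ∃ d : Basis (Fin 7) ℝ K, (∀ k, (d k : L) = Z k) ∧ ∀ i j, ⁅d i, d j⁆ = gmuBr μ d i j := by
  let d : Basis (Fin 7) ℝ K := (Basis.span hli).map (LinearEquiv.ofEq _ _ hK.symm)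
  have hdZ : ∀ k, (d k : L) = Z k := fun k => by rw [Basis.map_apply, Basis.span_apply]; rfl
  refine ⟨d, hdZ, fun i j => Subtype.ext ?_⟩
  have hcoe : ((gmuBr μ d i j : K) : L) = gmuBr μ Z i j :=
    map_gmuBr d K.toSubmodule.subtype hdZ μ i j
  rw [hcoe, ← hZ, ← hdZ, ← hdZ]
  rfl

end GmuSubalgebra

section AdaptedFamily

variable {L : Type*} [LieRing L] [LieAlgebra ℝ L]

/-- `⁅X₁, X₂ + λX₀⁆ = (1 - λ)X₄`, hence the fourth entry. -/
def gAdapted (lam : ℝ) (b : Fin 8 → L) : Fin 7 → L :=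
  ![b 1, b 2 + lam • b 0, b 3, (1 - lam) • b 4, b 5, b 6, b 7]

lemma lie_gAdapted (lam : ℝ) {b : Fin 8 → L} (hb : ∀ i j, ⁅b i, b j⁆ = gBr b i j)
    (i j : Fin 7) : ⁅gAdapted lam b i, gAdapted lam b j⁆ = gmuBr lam (gAdapted lam b) i j := by
  fin_cases i <;> fin_cases j <;> simp [gAdapted, gmuBr, gBr, hb] <;> module

lemma linearIndependent_gAdapted {lam : ℝ} (hlam : lam ≠ 1) (b : Basis (Fin 8) ℝ L) :
    LinearIndependent ℝ (gAdapted lam b) := by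
  rw [Fintype.linearIndependent_iff]
  intro g hg
  have hcoord : ∀ k, b.repr (∑ i, g i • gAdapted lam b i) k = 0 := by simp [hg]
  have h1 := hcoord 1
  have h2 := hcoord 2
  have h3 := hcoord 3
  have h4 := hcoord 4
  have h5 := hcoord 5
  have h6 := hcoord 6
  have h7 := hcoord 7
  simp [Fin.sum_univ_seven, gAdapted] at h1 h2 h3 h4 h5 h6 h7
  have h4' : g 3 = 0 := h4.resolve_right (sub_ne_zero.2 hlam.symm)
  intro i
  fin_cases i <;> assumption

end AdaptedFamily

theorem stmt0
    {L : Type*} [LieRing L] [LieAlgebra ℝ L]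
    (b : Basis (Fin 8) ℝ L)
    (hb : ∀ i j : Fin 8, ⁅b i, b j⁆ = gBr (fun k => b k) i j)
    (lam : ℝ) (hlam : lam ≠ 1)
    (W1 : Submodule ℝ L)
    (hW1 : W1 = Submodule.span ℝ {b 1, b 2 + lam • b 0, b 3})
    (h : LieSubalgebra ℝ L)
    (hh : h = LieSubalgebra.lieSpan ℝ L (W1 : Set L))
    -- an arbitrary realization of the Carnot algebra `𝔤_lam`
    {M : Type*} [LieRing M] [LieAlgebra ℝ M]
    (c : Basis (Fin 7) ℝ M)
    (hc : ∀ i j : Fin 7, ⁅c i, c j⁆ = gmuBr lam (fun k => c k) i j) :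
    -- the generated subalgebra has dimension 7
    Module.finrank ℝ h = 7 ∧
    -- it is stratified of step 3, with first stratum `W¹`
    (∃ V : ℕ → Submodule ℝ h,
      IsStratification (↥h) 3 V ∧ (∀ x : h, x ∈ V 0 ↔ (x : L) ∈ W1) ∧
      -- and it is isomorphic, as a stratified Lie algebra, to `𝔤_lam`
      ∃ e : h ≃ₗ⁅ℝ⁆ M,
        Submodule.map (e : h →ₗ⁅ℝ⁆ M).toLinearMap (V 0)
            = Submodule.span ℝ {c 0, c 1, c 2} ∧
        Submodule.map (e : h →ₗ⁅ℝ⁆ M).toLinearMap (V 1)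
            = Submodule.span ℝ {c 3, c 4, c 5} ∧
        Submodule.map (e : h →ₗ⁅ℝ⁆ M).toLinearMap (V 2)
            = Submodule.span ℝ {c 6} ) := by
  have hZ := lie_gAdapted lam hb
  have hW1Z : W1 = span ℝ {gAdapted lam b 0, gAdapted lam b 1, gAdapted lam b 2} := hW1
  obtain ⟨d, hdZ, hd⟩ := LieSubalgebra.exists_gmuBr_basis (linearIndependent_gAdapted hlam b)
    (hh ▸ hW1Z ▸ lieSpan_span_eq_span_range_of_gmuBr hZ) hZ
  let e := lieEquivOfBasis d c (d.equiv_lie_of_gmuBr c hd hc)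
  have he : ∀ n, (gmuStratum d n).map (e : h →ₗ⁅ℝ⁆ M).toLinearMap = gmuStratum c n :=
    map_gmuStratum d _ (lieEquivOfBasis_apply_basis d c _)
  have hV0 : (gmuStratum d 0).map h.toSubmodule.subtype = W1 := by
    rw [map_gmuStratum d _ hdZ, gmuStratum_zero, hW1Z]
  refine ⟨by simp [finrank_eq_card_basis d], gmuStratum d, isStratification_gmuStratum d hd,
    fun x => ?_, e, by rw [he, gmuStratum_zero], by rw [he, gmuStratum_one],
    by rw [he, gmuStratum_two]⟩
  rw [← comap_map_eq_of_injective h.toSubmodule.injective_subtype (gmuStratum d 0), mem_comap,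
    hV0]
  rfl
end

section
/- Let S be a C² hypersurface without characteristic points in the Heisenberg group ℍⁿ with n ≥ 2. Then the assignment x ↦ 𝒟_x := 𝕍₁(x) ∩ T_xS defines a distribution of rank 2n−1 on S that is bracket generating of step 2: for every x ∈ S one has 𝒟_x + [𝒟,𝒟]_x = T_xS. -/
/-!
The horizontal space at `p` is the kernel of the contact form `θ_p v = v_y - ½ ω(p, v)`, where
`ω` is the standard symplectic form on the first layer. Hence `𝒟_x = ker θ_x ∩ ker df_x` is cut
out by two independent covectors (this is non-characteristicity) and has rank `2n - 1`, one less
than `T_xS = ker df_x`.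

Brackets of sections of `𝒟` are tangent to `S`: `df(W)` vanishes on `S`, so by the implicit
function theorem its derivative along `V` vanishes; exchanging `V` and `W` and subtracting, the
symmetric second derivative of `f` cancels and `df([V, W]) = 0`. Conversely, for horizontal
fields Cartan's formula reads `θ([V, W]) = ω(V, W)`. If the frame field `Z` is not tangent to `S`
and has no `m`-th components, the sections `df(Z) X_m - df(X_m) Z` and
`df(Z) X_{n+m} - df(X_{n+m}) Z` of `𝒟` have a bracket with `θ`-component `df(Z)² ≠ 0`, which
supplies the missing direction.
-/

open Module

namespace Heis

/-- Points of the `n`-th Heisenberg group `ℍⁿ` in exponential coordinates: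
`((x₁, …, x_n), (x_{n+1}, …, x_{2n}), y₁)`; as a smooth manifold, `ℍⁿ ≅ ℝ^{2n+1}`. -/
abbrev Pt (n : ℕ) := (Fin n → ℝ) × (Fin n → ℝ) × ℝ

variable {n : ℕ}

/-- The left-invariant frame vector field `X_j`, `j = 1, …, n`, at `p`:
`X_j = ∂_{x_j} − ½ x_{n+j} ∂_y`. -/
noncomputable def XH (j : Fin n) (p : Pt n) : Pt n :=
  ((Pi.single j 1 : Fin n → ℝ), 0, -(1 / 2) * p.2.1 j)

/-- The left-invariant frame vector field `X_{n+j}`, `j = 1, …, n`, at `p`: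
`X_{n+j} = ∂_{x_{n+j}} + ½ x_j ∂_y`. (These satisfy `[X_j, X_{n+j}] = Y₁ = ∂_y`.) -/
noncomputable def XV (j : Fin n) (p : Pt n) : Pt n :=
  (0, (Pi.single j 1 : Fin n → ℝ), (1 / 2) * p.1 j)

/-- The horizontal space `𝕍₁(p) = span{X₁(p), …, X_{2n}(p)}`. -/
def horizAt (p : Pt n) : Submodule ℝ (Pt n) :=
  Submodule.span ℝ (Set.range (fun j => XH j p) ∪ Set.range (fun j => XV j p))

/-- The intersection `𝒟_x = 𝕍₁(x) ∩ T_xS` for the hypersurface locally defined by `f`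
(whose Euclidean tangent space at `x` is `ker (df_x)`). -/
noncomputable def DD (f : Pt n → ℝ) (x : Pt n) : Submodule ℝ (Pt n) :=
  horizAt x ⊓ LinearMap.ker (fderiv ℝ f x : Pt n →ₗ[ℝ] ℝ)

/-- `S` is a `C²` hypersurface without characteristic points: locally the zero set of a
`C²` function with nonvanishing gradient, such that at no point of `S` the horizontal
space is contained in the Euclidean tangent space. -/
def IsC2NonCharHypersurface (S : Set (Pt n)) : Prop :=
  ∀ p ∈ S, ∃ (U : Set (Pt n)) (f : Pt n → ℝ),
    IsOpen U ∧ p ∈ U ∧ ContDiff ℝ 2 f ∧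
    S ∩ U = {x | f x = 0} ∩ U ∧
    (∀ x ∈ U, fderiv ℝ f x ≠ 0) ∧
    ∀ x ∈ S ∩ U, ¬horizAt x ≤ LinearMap.ker (fderiv ℝ f x : Pt n →ₗ[ℝ] ℝ)

/-- The span `[𝒟,𝒟]_p` of the brackets at `p` of `C¹` local sections of the distribution
`𝒟 = 𝕍₁ ∩ TS` (extended near `S`), for `S` locally defined by `f` on `U`. -/
noncomputable def bracketAt (S : Set (Pt n)) (f : Pt n → ℝ) (U : Set (Pt n)) (p : Pt n) :
    Submodule ℝ (Pt n) :=
  Submodule.span ℝ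
    {b : Pt n | ∃ (V W : Pt n → Pt n) (U' : Set (Pt n)),
      IsOpen U' ∧ p ∈ U' ∧ U' ⊆ U ∧
      ContDiffOn ℝ 1 V U' ∧ ContDiffOn ℝ 1 W U' ∧
      (∀ y ∈ U' ∩ S, V y ∈ DD f y) ∧ (∀ y ∈ U' ∩ S, W y ∈ DD f y) ∧
      b = fderiv ℝ W p (V p) - fderiv ℝ V p (W p)}

end Heis

open Filter Topology

theorem Module.Dual.finrank_ker_inf_ker_add_two {K V : Type*} [Field K] [AddCommGroup V]
    [Module K V] [FiniteDimensional K V] {φ ψ : Module.Dual K V} (hφ : φ ≠ 0)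
    (h : ¬LinearMap.ker φ ≤ LinearMap.ker ψ) :
    finrank K ↥(LinearMap.ker φ ⊓ LinearMap.ker ψ) + 2 = finrank K V := by
  have hψ : ψ ≠ 0 := by rintro rfl; simp at h
  have hφV := finrank_ker_add_one_of_ne_zero hφ
  have hψV := finrank_ker_add_one_of_ne_zero hψ
  have hsup : LinearMap.ker φ ⊔ LinearMap.ker ψ = ⊤ := by
    refine Submodule.eq_of_le_of_finrank_le le_top ?_
    have := Submodule.finrank_lt_finrank_of_lt (right_lt_sup.2 h)
    rw [finrank_top]
    omega
  have := Submodule.finrank_sup_add_finrank_inf_eq (LinearMap.ker φ) (LinearMap.ker ψ)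
  rw [hsup, finrank_top] at this
  omega

theorem Submodule.sup_eq_of_finrank_add_one {K V : Type*} [DivisionRing K] [AddCommGroup V]
    [Module K V] [FiniteDimensional K V] {A B C : Submodule K V} (hA : A ≤ C) (hB : B ≤ C)
    (hBA : ¬B ≤ A) (h : finrank K A + 1 = finrank K C) : A ⊔ B = C := by
  refine Submodule.eq_of_le_of_finrank_le (sup_le hA hB) ?_
  have := Submodule.finrank_lt_finrank_of_lt (left_lt_sup.2 hBA)
  omega

theorem HasStrictFDerivAt.ker_le_ker_of_eventually_eq_zero {𝕜 : Type*}
    [NontriviallyNormedField 𝕜] [CompleteSpace 𝕜] {E F G : Type*} [NormedAddCommGroup E]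
    [NormedSpace 𝕜 E] [CompleteSpace E] [NormedAddCommGroup F] [NormedSpace 𝕜 F]
    [FiniteDimensional 𝕜 F] [NormedAddCommGroup G] [NormedSpace 𝕜 G] {f : E → F}
    {f' : E →L[𝕜] F} {h : E → G} {h' : E →L[𝕜] G} {a : E} (hf : HasStrictFDerivAt f f' a)
    (hf' : f'.range = ⊤) (hh : HasFDerivAt h h' a)
    (hzero : ∀ᶠ x in 𝓝 a, f x = f a → h x = 0) : f'.ker ≤ h'.ker := by
  intro w hw
  set ψ := hf.implicitFunction f f' hf' (f a)
  have hψ : HasStrictFDerivAt ψ f'.ker.subtypeL 0 := hf.to_implicitFunction hf'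
  have hψ0 : ψ 0 = a := hf.implicitFunction_apply_image hf'
  have hfiber : ∀ᶠ z in 𝓝 0, f (ψ z) = f a :=
    ((continuous_const.prodMk continuous_id).tendsto 0).eventually
      (hf.map_implicitFunction_eq hf')
  have hψa : Tendsto ψ (𝓝 0) (𝓝 a) := hψ0 ▸ hψ.continuousAt.tendsto
  have hcomp : (h ∘ ψ) =ᶠ[𝓝 0] fun _ => 0 := by
    filter_upwards [hfiber, hψa.eventually hzero] with z hz hz' using hz' hz
  have hderiv : HasFDerivAt (h ∘ ψ) (h'.comp f'.ker.subtypeL) 0 :=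
    (hψ0 ▸ hh).comp 0 hψ.hasFDerivAt
  have := hderiv.unique (hcomp.hasFDerivAt_iff.2 (hasFDerivAt_const 0 0))
  simpa using congr($this ⟨w, hw⟩)

theorem fderiv_apply_lieBracket_eq_zero_of_tangent {E F : Type*} [NormedAddCommGroup E]
    [NormedSpace ℝ E] [CompleteSpace E] [NormedAddCommGroup F] [NormedSpace ℝ F]
    [FiniteDimensional ℝ F] {f : E → F} {V W : E → E} {x : E} (hf : ContDiffAt ℝ 2 f x)
    (hsurj : (fderiv ℝ f x).range = ⊤) (hV : DifferentiableAt ℝ V x)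
    (hW : DifferentiableAt ℝ W x) (hVt : ∀ᶠ y in 𝓝 x, f y = f x → fderiv ℝ f y (V y) = 0)
    (hWt : ∀ᶠ y in 𝓝 x, f y = f x → fderiv ℝ f y (W y) = 0) :
    fderiv ℝ f x (VectorField.lieBracket ℝ V W x) = 0 := by
  have hstrict := hf.hasStrictFDerivAt (by norm_num)
  have hdf : DifferentiableAt ℝ (fderiv ℝ f) x :=
    (hf.fderiv_right (m := 1) (by norm_num)).differentiableAt (by norm_num)
  have hderiv_tangent {X Y : E → E} (hY : DifferentiableAt ℝ Y x)
      (hXt : ∀ᶠ y in 𝓝 x, f y = f x → fderiv ℝ f y (X y) = 0)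
      (hYt : ∀ᶠ y in 𝓝 x, f y = f x → fderiv ℝ f y (Y y) = 0) :
      fderiv ℝ (fun y => fderiv ℝ f y (Y y)) x (X x) = 0 :=
    hstrict.ker_le_ker_of_eventually_eq_zero hsurj (hdf.clm_apply hY).hasFDerivAt hYt
      (hXt.self_of_nhds rfl)
  rw [VectorField.fderiv_apply_lieBracket hf (by simp [minSmoothness_of_isRCLikeNormedField])
    hW hV, hderiv_tangent hW hVt hWt, hderiv_tangent hV hWt hVt, sub_zero]

namespace Heis

variable {n : ℕ}

def symplecticForm : Pt n →ₗ[ℝ] Pt n →ₗ[ℝ] ℝ := by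
  refine LinearMap.mk₂ ℝ (fun v w => ∑ i, (v.1 i * w.2.1 i - v.2.1 i * w.1 i)) ?_ ?_ ?_ ?_ <;>
  · intros
    simp only [Prod.fst_add, Prod.snd_add, Prod.smul_fst, Prod.smul_snd, Pi.add_apply,
      Pi.smul_apply, smul_eq_mul, Finset.mul_sum, ← Finset.sum_add_distrib]
    exact Finset.sum_congr rfl fun _ _ => by ring

lemma symplecticForm_apply (v w : Pt n) :
    symplecticForm v w = ∑ i, (v.1 i * w.2.1 i - v.2.1 i * w.1 i) := rfl

lemma symplecticForm_swap (v w : Pt n) : symplecticForm w v = -symplecticForm v w := by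
  simp only [symplecticForm_apply, ← Finset.sum_neg_distrib]
  exact Finset.sum_congr rfl fun _ _ => by ring

@[simp] lemma symplecticForm_self (v : Pt n) : symplecticForm v v = 0 := by
  linarith [symplecticForm_swap v v]

@[simp] lemma symplecticForm_XH_apply (m : Fin n) (p w : Pt n) :
    symplecticForm (XH m p) w = w.2.1 m := by
  simp [symplecticForm_apply, XH, Pi.single_apply]

@[simp] lemma symplecticForm_apply_XV (m : Fin n) (p v : Pt n) :
    symplecticForm v (XV m p) = v.1 m := by
  simp [symplecticForm_apply, XV, Pi.single_apply]

lemma symplecticForm_smul_sub_smul {m : Fin n} {p z : Pt n} (hz₁ : z.1 m = 0)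
    (hz₂ : z.2.1 m = 0) (a b c : ℝ) :
    symplecticForm (a • XH m p - b • z) (a • XV m p - c • z) = a ^ 2 := by
  have hXV : (XV m p).2.1 m = 1 := by simp [XV]
  simp [hz₁, hz₂, hXV, sq]

noncomputable def contactForm (p : Pt n) : Pt n →ₗ[ℝ] ℝ :=
  LinearMap.snd ℝ _ ℝ ∘ₗ LinearMap.snd ℝ _ _ - (1 / 2 : ℝ) • symplecticForm p

lemma contactForm_apply (p v : Pt n) :
    contactForm p v = v.2.2 - 1 / 2 * symplecticForm p v := rfl

@[simp] lemma contactForm_XH (j : Fin n) (p : Pt n) : contactForm p (XH j p) = 0 := by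
  simp [contactForm_apply, symplecticForm_apply, XH, Pi.single_apply]

@[simp] lemma contactForm_XV (j : Fin n) (p : Pt n) : contactForm p (XV j p) = 0 := by
  simp [contactForm_apply, symplecticForm_apply, XV, Pi.single_apply]

lemma XH_mem_horizAt (j : Fin n) (p : Pt n) : XH j p ∈ horizAt p :=
  Submodule.subset_span (Or.inl ⟨j, rfl⟩)

lemma XV_mem_horizAt (j : Fin n) (p : Pt n) : XV j p ∈ horizAt p :=
  Submodule.subset_span (Or.inr ⟨j, rfl⟩)

lemma eq_sum_frame_add_contactForm (p v : Pt n) :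
    v = ∑ j, v.1 j • XH j p + ∑ j, v.2.1 j • XV j p + contactForm p v • (0, 0, 1) := by
  ext i
  · simp [XH, XV, Prod.fst_sum, Finset.sum_apply, Pi.single_apply]
  · simp [XH, XV, Prod.snd_sum, Prod.fst_sum, Finset.sum_apply, Pi.single_apply]
  · simp only [XH, XV, one_div, neg_mul, mul_neg, Prod.smul_mk, smul_eq_mul, Prod.snd_add,
      Prod.snd_sum, Finset.sum_neg_distrib, contactForm_apply, symplecticForm_apply,
      Finset.sum_sub_distrib, mul_sub, Finset.mul_sum, mul_one, one_mul, mul_comm, mul_left_comm,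
      mul_assoc]
    ring

lemma horizAt_eq_ker_contactForm (p : Pt n) : horizAt p = LinearMap.ker (contactForm p) := by
  apply le_antisymm
  · rw [horizAt, Submodule.span_le]
    rintro _ (⟨j, rfl⟩ | ⟨j, rfl⟩) <;> simp
  · intro v hv
    rw [LinearMap.mem_ker] at hv
    rw [eq_sum_frame_add_contactForm p v, hv, zero_smul, add_zero]
    exact add_mem (sum_mem fun j _ => Submodule.smul_mem _ _ (XH_mem_horizAt j p))
      (sum_mem fun j _ => Submodule.smul_mem _ _ (XV_mem_horizAt j p))

lemma mem_horizAt_iff (p v : Pt n) : v ∈ horizAt p ↔ contactForm p v = 0 := by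
  rw [horizAt_eq_ker_contactForm, LinearMap.mem_ker]

lemma contactForm_ne_zero (p : Pt n) : contactForm p ≠ 0 := fun h => by
  simpa [contactForm_apply, symplecticForm_apply] using LinearMap.congr_fun h (0, 0, 1)

lemma finrank_Pt : finrank ℝ (Pt n) = 2 * n + 1 := by
  rw [finrank_prod, finrank_prod, finrank_fin_fun, finrank_self]
  ring

lemma finrank_DD {f : Pt n → ℝ} {x : Pt n}
    (hnc : ¬horizAt x ≤ LinearMap.ker (fderiv ℝ f x : Pt n →ₗ[ℝ] ℝ)) :
    finrank ℝ (DD f x) = 2 * n - 1 := by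
  rw [horizAt_eq_ker_contactForm] at hnc
  have := Module.Dual.finrank_ker_inf_ker_add_two (contactForm_ne_zero x) hnc
  rw [finrank_Pt, ← horizAt_eq_ker_contactForm] at this
  rw [DD]
  omega

lemma contactForm_fderiv_apply {W : Pt n → Pt n} {p : Pt n} (hW : DifferentiableAt ℝ W p)
    (hWθ : ∀ᶠ y in 𝓝 p, contactForm y (W y) = 0) (v : Pt n) :
    contactForm p (fderiv ℝ W p v) = 1 / 2 * symplecticForm v (W p) := by
  let ω := (symplecticForm : Pt n →ₗ[ℝ] Pt n →ₗ[ℝ] ℝ).toContinuousBilinearMap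
  let π := (LinearMap.snd ℝ (Fin n → ℝ) ℝ ∘ₗ
    LinearMap.snd ℝ (Fin n → ℝ) ((Fin n → ℝ) × ℝ)).toContinuousLinearMap
  have hderiv := (π.hasFDerivAt.comp p hW.hasFDerivAt).sub
    ((ω.hasFDerivAt_of_bilinear (hasFDerivAt_id p) hW.hasFDerivAt).const_smul (1 / 2 : ℝ))
  have hzero : HasFDerivAt (fun y => contactForm y (W y)) 0 p :=
    (Filter.EventuallyEq.hasFDerivAt_iff hWθ).2 (hasFDerivAt_const (𝕜 := ℝ) (0 : ℝ) p)
  have := congr($(hderiv.unique hzero) v)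
  simp only [sub_apply, add_apply, smul_apply, zero_apply, ContinuousLinearMap.comp_apply,
    ContinuousLinearMap.precompR_apply, ContinuousLinearMap.precompL_apply,
    ContinuousLinearMap.compL_apply, ContinuousLinearMap.id_apply, id_eq,
    LinearMap.toContinuousBilinearMap_apply, LinearMap.coe_toContinuousLinearMap',
    LinearMap.coe_comp, LinearMap.coe_snd, Function.comp_apply, smul_eq_mul, ω, π] at this
  rw [contactForm_apply]
  linarith

lemma contactForm_lieBracket {V W : Pt n → Pt n} {p : Pt n} (hV : DifferentiableAt ℝ V p)
    (hW : DifferentiableAt ℝ W p) (hVθ : ∀ᶠ y in 𝓝 p, contactForm y (V y) = 0)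
    (hWθ : ∀ᶠ y in 𝓝 p, contactForm y (W y) = 0) :
    contactForm p (VectorField.lieBracket ℝ V W p) = symplecticForm (V p) (W p) := by
  rw [VectorField.lieBracket, map_sub, contactForm_fderiv_apply hW hWθ,
    contactForm_fderiv_apply hV hVθ, symplecticForm_swap (W p)]
  ring

lemma contDiff_XH (j : Fin n) : ContDiff ℝ 1 (XH j) := by
  unfold XH; fun_prop

lemma contDiff_XV (j : Fin n) : ContDiff ℝ 1 (XV j) := by
  unfold XV; fun_prop

lemma smul_sub_smul_mem_DD {f : Pt n → ℝ} {y a z : Pt n} (ha : a ∈ horizAt y)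
    (hz : z ∈ horizAt y) : fderiv ℝ f y z • a - fderiv ℝ f y a • z ∈ DD f y :=
  ⟨sub_mem (Submodule.smul_mem _ _ ha) (Submodule.smul_mem _ _ hz), by
    simp [LinearMap.mem_ker, mul_comm]⟩

lemma exists_sections_contactForm_lieBracket {f : Pt n → ℝ} (hf : ContDiff ℝ 2 f)
    {Z : Pt n → Pt n} (hZ : ContDiff ℝ 1 Z) (hZh : ∀ y, Z y ∈ horizAt y) {m : Fin n}
    {x : Pt n} (hZ₁ : (Z x).1 m = 0) (hZ₂ : (Z x).2.1 m = 0) :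
    ∃ V W : Pt n → Pt n, ContDiff ℝ 1 V ∧ ContDiff ℝ 1 W ∧
      (∀ y, V y ∈ DD f y) ∧ (∀ y, W y ∈ DD f y) ∧
      contactForm x (VectorField.lieBracket ℝ V W x) = fderiv ℝ f x (Z x) ^ 2 := by
  have hdf : ContDiff ℝ 1 (fderiv ℝ f) := hf.fderiv_right (by norm_num)
  let tangentPart (A : Pt n → Pt n) (y : Pt n) : Pt n :=
    fderiv ℝ f y (Z y) • A y - fderiv ℝ f y (A y) • Z y
  have htangentPart {A : Pt n → Pt n} (hA : ContDiff ℝ 1 A) (hAh : ∀ y, A y ∈ horizAt y) :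
      ContDiff ℝ 1 (tangentPart A) ∧ ∀ y, tangentPart A y ∈ DD f y :=
    ⟨((hdf.clm_apply hZ).smul hA).sub ((hdf.clm_apply hA).smul hZ),
      fun y => smul_sub_smul_mem_DD (hAh y) (hZh y)⟩
  obtain ⟨hV, hVD⟩ := htangentPart (contDiff_XH m) (XH_mem_horizAt m)
  obtain ⟨hW, hWD⟩ := htangentPart (contDiff_XV m) (XV_mem_horizAt m)
  refine ⟨_, _, hV, hW, hVD, hWD, ?_⟩
  have hθ {X : Pt n → Pt n} (hX : ∀ y, X y ∈ DD f y) :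
      ∀ᶠ y in 𝓝 x, contactForm y (X y) = 0 :=
    Eventually.of_forall fun y => (mem_horizAt_iff y _).1 (hX y).1
  rw [contactForm_lieBracket (hV.differentiable one_ne_zero x)
    (hW.differentiable one_ne_zero x) (hθ hVD) (hθ hWD)]
  exact symplecticForm_smul_sub_smul hZ₁ hZ₂ _ _ _

lemma exists_horizontal_field_not_tangent (hn : 2 ≤ n) {f : Pt n → ℝ} {x : Pt n}
    (hnc : ¬horizAt x ≤ LinearMap.ker (fderiv ℝ f x : Pt n →ₗ[ℝ] ℝ)) :
    ∃ (Z : Pt n → Pt n) (m : Fin n), ContDiff ℝ 1 Z ∧ (∀ y, Z y ∈ horizAt y) ∧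
      (Z x).1 m = 0 ∧ (Z x).2.1 m = 0 ∧ fderiv ℝ f x (Z x) ≠ 0 := by
  obtain ⟨j, hj⟩ : ∃ j, fderiv ℝ f x (XH j x) ≠ 0 ∨ fderiv ℝ f x (XV j x) ≠ 0 := by
    by_contra! h
    refine hnc (Submodule.span_le.2 ?_)
    rintro _ (⟨j, rfl⟩ | ⟨j, rfl⟩)
    exacts [(h j).1, (h j).2]
  have := Fin.nontrivial_iff_two_le.2 hn
  obtain ⟨m, hmj⟩ := exists_ne j
  rcases hj with hj | hj
  · exact ⟨XH j, m, contDiff_XH j, XH_mem_horizAt j, by simp [XH, hmj], by simp [XH], hj⟩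
  · exact ⟨XV j, m, contDiff_XV j, XV_mem_horizAt j, by simp [XV], by simp [XV, hmj], hj⟩

lemma bracketAt_le_ker {S U : Set (Pt n)} {f : Pt n → ℝ} {x : Pt n} (hf : ContDiff ℝ 2 f)
    (hzero : S ∩ U = {x | f x = 0} ∩ U) (hx : x ∈ S ∩ U) (hgrad : fderiv ℝ f x ≠ 0) :
    bracketAt S f U x ≤ LinearMap.ker (fderiv ℝ f x : Pt n →ₗ[ℝ] ℝ) := by
  rw [bracketAt, Submodule.span_le]
  rintro _ ⟨V, W, U', hU', hxU', hU'U, hV, hW, hVD, hWD, rfl⟩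
  have hfx : f x = 0 := (hzero ▸ hx).1
  have htangent {X : Pt n → Pt n} (hX : ∀ y ∈ U' ∩ S, X y ∈ DD f y) :
      ∀ᶠ y in 𝓝 x, f y = f x → fderiv ℝ f y (X y) = 0 := by
    filter_upwards [hU'.mem_nhds hxU'] with y hy hfy
    have hyS : y ∈ S ∩ U := hzero ▸ ⟨hfy.trans hfx, hU'U hy⟩
    exact (hX y ⟨hy, hyS.1⟩).2
  have hsurj : (fderiv ℝ f x).range = ⊤ :=
    Module.Dual.range_eq_top_of_ne_zero (f := (fderiv ℝ f x : Pt n →ₗ[ℝ] ℝ))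
      (ContinuousLinearMap.coe_injective.ne hgrad)
  exact fderiv_apply_lieBracket_eq_zero_of_tangent hf.contDiffAt hsurj
    ((hV.differentiableOn one_ne_zero).differentiableAt (hU'.mem_nhds hxU'))
    ((hW.differentiableOn one_ne_zero).differentiableAt (hU'.mem_nhds hxU'))
    (htangent hVD) (htangent hWD)

theorem stmt15_general {n : ℕ} (hn : 2 ≤ n) (S : Set (Pt n))
    (U : Set (Pt n)) (f : Pt n → ℝ)
    (hU : IsOpen U) (hf : ContDiff ℝ 2 f)
    (hzero : S ∩ U = {x | f x = 0} ∩ U)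
    (hgrad : ∀ x ∈ U, fderiv ℝ f x ≠ 0)
    (hnc : ∀ x ∈ S ∩ U, ¬horizAt x ≤ LinearMap.ker (fderiv ℝ f x : Pt n →ₗ[ℝ] ℝ)) :
    ∀ x ∈ S ∩ U,
      finrank ℝ (DD f x) = 2 * n - 1 ∧
      DD f x ⊔ bracketAt S f U x = LinearMap.ker (fderiv ℝ f x : Pt n →ₗ[ℝ] ℝ) := by
  intro x hx
  have hrank := finrank_DD (hnc x hx)
  refine ⟨hrank, ?_⟩
  obtain ⟨Z, m, hZ, hZh, hZ₁, hZ₂, hZx⟩ := exists_horizontal_field_not_tangent hn (hnc x hx)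
  obtain ⟨V, W, hV, hW, hVD, hWD, hθ⟩ :=
    exists_sections_contactForm_lieBracket hf hZ hZh hZ₁ hZ₂
  have hmem : VectorField.lieBracket ℝ V W x ∈ bracketAt S f U x :=
    Submodule.subset_span ⟨V, W, U, hU, hx.2, subset_rfl, hV.contDiffOn, hW.contDiffOn,
      fun y _ => hVD y, fun y _ => hWD y, rfl⟩
  have hnot : VectorField.lieBracket ℝ V W x ∉ DD f x := fun h =>
    pow_ne_zero 2 hZx (hθ ▸ (mem_horizAt_iff x _).1 h.1)
  have hker := Module.Dual.finrank_ker_add_one_of_ne_zero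
    (f := (fderiv ℝ f x : Pt n →ₗ[ℝ] ℝ)) (ContinuousLinearMap.coe_injective.ne (hgrad x hx.2))
  rw [finrank_Pt] at hker
  exact Submodule.sup_eq_of_finrank_add_one inf_le_right
    (bracketAt_le_ker hf hzero hx (hgrad x hx.2)) (fun h => hnot (h hmem)) (by omega)

/-- let `S` be a `C²` hypersurface without characteristic points in `ℍⁿ`,
`n ≥ 2`. Then `x ↦ 𝒟_x = 𝕍₁(x) ∩ T_xS` is a distribution of rank `2n − 1` on `S` which is
bracket generating of step 2: `𝒟_x + [𝒟,𝒟]_x = T_xS` for every `x ∈ S`. (The claims are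
stated via an arbitrary local defining function `f` of `S`.) -/
theorem stmt15 {n : ℕ} (hn : 2 ≤ n) (S : Set (Pt n))
    (hS : IsC2NonCharHypersurface S)
    (p : Pt n) (hp : p ∈ S) (U : Set (Pt n)) (f : Pt n → ℝ)
    (hU : IsOpen U) (hpU : p ∈ U) (hf : ContDiff ℝ 2 f)
    (hzero : S ∩ U = {x | f x = 0} ∩ U)
    (hgrad : ∀ x ∈ U, fderiv ℝ f x ≠ 0)
    (hnc : ∀ x ∈ S ∩ U, ¬horizAt x ≤ LinearMap.ker (fderiv ℝ f x : Pt n →ₗ[ℝ] ℝ)) :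
    ∀ x ∈ S ∩ U,
      finrank ℝ (DD f x) = 2 * n - 1 ∧
      DD f x ⊔ bracketAt S f U x = LinearMap.ker (fderiv ℝ f x : Pt n →ₗ[ℝ] ℝ) :=
  stmt15_general hn S U f hU hf hzero hgrad hnc

end Heis
end
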